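/- In the DGKT scenario, the stationarity conditions -3V_H + 3V_0 - V_4 = 0 and -2V_H - 4(V_0 + V_4) - 3V_O = 0 imply that the on-shell potential V = V_H + V_0 + V_4 + V_O equals -(4/9)V_4; moreover, if V_H ≥ 0, V_0 ≥ 0 and V_4 > 0 then V_O < 0 (orientifolds are necessary). -/
import Mathlib

/-- DGKT scenario: the stationarity conditions `-3V_H + 3V₀ - V₄ = 0` and
`-2V_H - 4(V₀+V₄) - 3V_O = 0` imply that the on-shell potential equals
`-(4/9)V₄`, and that `V_O < 0` if `V_H ≥ 0`, `V₀ ≥ 0`, `V₄ > 0`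
(orientifolds are necessary). -/
theorem dgkt_on_shell_potential (V_H V_0 V_4 V_O : ℝ)
    (h1 : -3 * V_H + 3 * V_0 - V_4 = 0)
    (h2 : -2 * V_H - 4 * (V_0 + V_4) - 3 * V_O = 0) :
    V_H + V_0 + V_4 + V_O = -(4 / 9) * V_4 ∧
    (0 ≤ V_H → 0 ≤ V_0 → 0 < V_4 → V_O < 0) := by
  constructor
  · linarith
  · intro hH h0 h4; linarith
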